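/- Error-free tracking under matched initial conditions: let V ∈ ℂ^{n×r} solve M V S_v² + D V S_v + K V = B R. If q : ℝ → ℂⁿ solves M q̈ + D q̇ + K q = B R e^{S_v t} q_{r,0} with initial conditions q(0) = V q_{r,0} and q̇(0) = V S_v q_{r,0}, and the homogeneous second-order system M ẍ + D ẋ + K x = 0 with zero initial conditions x(0) = 0, ẋ(0) = 0 has only the trivial solution, then q(t) = V e^{S_v t} q_{r,0} for all t, and hence the output satisfies C q(t) = C V e^{S_v t} q_{r,0} for all t. -/

import Mathlib

/-!
The reference trajectory `f t = V e^{t S_v} q_{r,0}` has derivatives `V e^{t S_v} S_v q_{r,0}` and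
`V e^{t S_v} S_v² q_{r,0}`. Since `S_v` commutes with `e^{t S_v}`, the Sylvester equation
`M V S_v² + D V S_v + K V = B R`, multiplied on the right by `e^{t S_v}`, says that `f` solves the
forced equation. So `q - f` solves the homogeneous equation with zero initial data, hence vanishes.
-/

open Matrix NormedSpace

theorem Matrix.hasDerivAt_mulVec_exp_smul_mulVec {𝕜 ι κ : Type*} [RCLike 𝕜] [Fintype ι]
    [DecidableEq ι] [Fintype κ] (S : Matrix ι ι 𝕜) (V : Matrix κ ι 𝕜) (v : ι → 𝕜) (t : ℝ) :
    HasDerivAt (fun s : ℝ => V *ᵥ (exp (s • S) *ᵥ v)) (V *ᵥ (exp (t • S) *ᵥ (S *ᵥ v))) t := by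
  -- `exp` only sees the topology, so any normed-algebra structure on matrices will do.
  let : NormedRing (Matrix ι ι 𝕜) := Matrix.linftyOpNormedRing
  let : NormedAlgebra ℝ (Matrix ι ι 𝕜) := Matrix.linftyOpNormedAlgebra
  let applyV : Matrix ι ι 𝕜 →ₗ[𝕜] ι → 𝕜 :=
    { toFun := fun X => X *ᵥ v
      map_add' := fun X Y => add_mulVec X Y v
      map_smul' := fun c X => smul_mulVec c X v }
  let L : Matrix ι ι 𝕜 →L[ℝ] κ → 𝕜 :=
    ((mulVecLin V).comp applyV).toContinuousLinearMap.restrictScalars ℝ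
  have hL : HasDerivAt (fun s : ℝ => L (exp (s • S))) (L (exp (t • S) * S)) t :=
    L.hasFDerivAt.comp_hasDerivAt t (hasDerivAt_exp_smul_const S t)
  rwa [show L (exp (t • S) * S) = V *ᵥ (exp (t • S) *ᵥ (S *ᵥ v)) by
    simp [L, applyV, mulVec_mulVec]] at hL

theorem Matrix.mulVec_sylvester_trajectory {α ι κ μ : Type*} [CommRing α] [Fintype ι]
    [Fintype κ] [DecidableEq κ] [Fintype μ] (M D K : Matrix ι ι α) (B : Matrix ι μ α)
    (R : Matrix μ κ α) (S E : Matrix κ κ α) (V : Matrix ι κ α)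
    (hSylv : M * V * S ^ 2 + D * V * S + K * V = B * R) (hSE : Commute S E) (v : κ → α) :
    M *ᵥ (V *ᵥ (E *ᵥ (S *ᵥ (S *ᵥ v)))) + D *ᵥ (V *ᵥ (E *ᵥ (S *ᵥ v))) + K *ᵥ (V *ᵥ (E *ᵥ v))
      = B *ᵥ (R *ᵥ (E *ᵥ v)) := by
  have hcomm : ∀ w, E *ᵥ (S *ᵥ w) = S *ᵥ (E *ᵥ w) := fun w => by
    rw [mulVec_mulVec, mulVec_mulVec, hSE.eq]
  simp only [hcomm]
  rw [mulVec_mulVec _ B R, ← hSylv]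
  simp only [add_mulVec, ← mulVec_mulVec, sq]

theorem stmt17_general {n m p r : ℕ} (M D K : Matrix (Fin n) (Fin n) ℂ)
    (B : Matrix (Fin n) (Fin m) ℂ) (C : Matrix (Fin p) (Fin n) ℂ)
    (Sv : Matrix (Fin r) (Fin r) ℂ) (R : Matrix (Fin m) (Fin r) ℂ)
    (V : Matrix (Fin n) (Fin r) ℂ) (qr0 : Fin r → ℂ)
    (hSylv : M * V * Sv ^ 2 + D * V * Sv + K * V = B * R)
    (q q' q'' : ℝ → Fin n → ℂ)
    (hq : ∀ t, HasDerivAt q (q' t) t) (hq' : ∀ t, HasDerivAt q' (q'' t) t)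
    (hODE : ∀ t : ℝ, M *ᵥ q'' t + D *ᵥ q' t + K *ᵥ q t
      = B *ᵥ (R *ᵥ (exp (t • Sv) *ᵥ qr0)))
    (hIC0 : q 0 = V *ᵥ qr0) (hIC1 : q' 0 = V *ᵥ (Sv *ᵥ qr0))
    (huniq : ∀ x x' x'' : ℝ → Fin n → ℂ,
      (∀ t, HasDerivAt x (x' t) t) → (∀ t, HasDerivAt x' (x'' t) t) →
      (∀ t : ℝ, M *ᵥ x'' t + D *ᵥ x' t + K *ᵥ x t = 0) →
      x 0 = 0 → x' 0 = 0 → ∀ t, x t = 0) :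
    ∀ t : ℝ, q t = V *ᵥ (exp (t • Sv) *ᵥ qr0) ∧
      C *ᵥ q t = (C * V) *ᵥ (exp (t • Sv) *ᵥ qr0) := by
  set f : ℝ → Fin n → ℂ := fun t => V *ᵥ (exp (t • Sv) *ᵥ qr0)
  set f' : ℝ → Fin n → ℂ := fun t => V *ᵥ (exp (t • Sv) *ᵥ (Sv *ᵥ qr0))
  set f'' : ℝ → Fin n → ℂ := fun t => V *ᵥ (exp (t • Sv) *ᵥ (Sv *ᵥ (Sv *ᵥ qr0)))
  have hf_forced :
      ∀ t, M *ᵥ f'' t + D *ᵥ f' t + K *ᵥ f t = B *ᵥ (R *ᵥ (exp (t • Sv) *ᵥ qr0)) :=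
    fun t => mulVec_sylvester_trajectory M D K B R Sv _ V hSylv
      ((Commute.refl Sv).smul_right t).exp_right qr0
  have hq_eq_f : ∀ t, q t - f t = 0 := by
    refine huniq _ (fun t => q' t - f' t) (fun t => q'' t - f'' t)
      (fun t => (hq t).sub (hasDerivAt_mulVec_exp_smul_mulVec Sv V qr0 t))
      (fun t => (hq' t).sub (hasDerivAt_mulVec_exp_smul_mulVec Sv V (Sv *ᵥ qr0) t))
      (fun t => ?_) (by simp [f, hIC0]) (by simp [f', hIC1])
    calc M *ᵥ (q'' t - f'' t) + D *ᵥ (q' t - f' t) + K *ᵥ (q t - f t)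
        = (M *ᵥ q'' t + D *ᵥ q' t + K *ᵥ q t) - (M *ᵥ f'' t + D *ᵥ f' t + K *ᵥ f t) := by
          simp only [mulVec_sub]; abel
      _ = 0 := by rw [hODE t, hf_forced t, sub_self]
  intro t
  have hqt : q t = f t := sub_eq_zero.mp (hq_eq_f t)
  exact ⟨hqt, by rw [hqt, mulVec_mulVec]⟩

/-- error-free tracking under matched initial conditions. If `V`
solves `M V S_v² + D V S_v + K V = B R`, `q` solves
`M q̈ + D q̇ + K q = B R e^{S_v t} q_{r,0}` with `q(0) = V q_{r,0}`,
`q̇(0) = V S_v q_{r,0}`, and the homogeneous system with zero initial data has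
only the trivial solution, then `q(t) = V e^{S_v t} q_{r,0}` and hence
`C q(t) = C V e^{S_v t} q_{r,0}` for all `t`. -/
theorem stmt17 {n m p r : ℕ} (M D K : Matrix (Fin n) (Fin n) ℂ)
    (B : Matrix (Fin n) (Fin m) ℂ) (C : Matrix (Fin p) (Fin n) ℂ)
    (Sv : Matrix (Fin r) (Fin r) ℂ) (R : Matrix (Fin m) (Fin r) ℂ)
    (V : Matrix (Fin n) (Fin r) ℂ) (qr0 : Fin r → ℂ)
    (hM : IsUnit M)
    (hSylv : M * V * Sv ^ 2 + D * V * Sv + K * V = B * R)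
    (q q' q'' : ℝ → Fin n → ℂ)
    (hq : ∀ t, HasDerivAt q (q' t) t) (hq' : ∀ t, HasDerivAt q' (q'' t) t)
    (hODE : ∀ t : ℝ, M *ᵥ q'' t + D *ᵥ q' t + K *ᵥ q t
      = B *ᵥ (R *ᵥ (exp (t • Sv) *ᵥ qr0)))
    (hIC0 : q 0 = V *ᵥ qr0) (hIC1 : q' 0 = V *ᵥ (Sv *ᵥ qr0))
    (huniq : ∀ x x' x'' : ℝ → Fin n → ℂ,
      (∀ t, HasDerivAt x (x' t) t) → (∀ t, HasDerivAt x' (x'' t) t) →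
      (∀ t : ℝ, M *ᵥ x'' t + D *ᵥ x' t + K *ᵥ x t = 0) →
      x 0 = 0 → x' 0 = 0 → ∀ t, x t = 0) :
    ∀ t : ℝ, q t = V *ᵥ (exp (t • Sv) *ᵥ qr0) ∧
      C *ᵥ q t = (C * V) *ᵥ (exp (t • Sv) *ᵥ qr0) :=
  stmt17_general M D K B C Sv R V qr0 hSylv q q' q'' hq hq' hODE hIC0 hIC1 huniq
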